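/- For all integers k and l: ⟨ψ̃_k ψ̃_l v_∅, v_∅⟩ equals 1/4 if k = l = 0, equals (−1)^l/2 if l ≥ 1 and k = −l, and equals 0 otherwise. Consequently, for all complex numbers z,w with 0 < |w| < |z|, the doubly indexed series ∑_{k,l∈ℤ} z^k w^l ⟨ψ̃_k ψ̃_l v_∅, v_∅⟩ converges absolutely to (z−w)/(4(z+w)). -/

import Mathlib

open scoped BigOperators

noncomputable section

/-- `W`, the real vector space with basis `{v_S}` indexed by finite subsets of `ℤ_{>0}`. -/
abbrev W : Type := Finset ℕ+ →₀ ℝ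

/-- the basis vector `v_S` -/
def vS (S : Finset ℕ+) : W := Finsupp.single S 1

/-- the vacuum vector `v_∅` -/
def vac : W := vS ∅

/-- extend values on basis vectors to a linear map -/
def onBasis (f : Finset ℕ+ → W) : W →ₗ[ℝ] W := Finsupp.lift W ℝ (Finset ℕ+) f

/-- `ψ_k v_S = (-1)^{#{s ∈ S : s > k}} v_{S ∪ {k}}` if `k ∉ S`, else `0`. -/
def psi (k : ℕ+) : W →ₗ[ℝ] W :=
  onBasis fun S =>
    if k ∈ S then 0
    else ((-1 : ℝ) ^ ((S.filter (fun s => k < s)).card)) • vS (insert k S)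

/-- `ψ*_k v_S = (1/2)(-1)^{#{s ∈ S : s > k}} v_{S \ {k}}` if `k ∈ S`, else `0`. -/
def psiStar (k : ℕ+) : W →ₗ[ℝ] W :=
  onBasis fun S =>
    if k ∈ S then ((2 : ℝ)⁻¹ * (-1 : ℝ) ^ ((S.filter (fun s => k < s)).card)) • vS (S.erase k)
    else 0

/-- the parity operator `Π v_S = (-1)^{|S|} v_S`. -/
def par : W →ₗ[ℝ] W := onBasis fun S => ((-1 : ℝ) ^ S.card) • vS S

/-- `α_n = 2 ∑_{j≥1} ψ_j ψ*_{n+j} + Π ψ*_n + 2 ∑_{j=1}^{(n-1)/2} (-1)^j ψ*_j ψ*_{n-j}`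
for odd `n ≥ 1` (on each basis vector the first sum has finitely many nonzero terms:
only `j` with `n + j ∈ S` contribute). -/
def alphaP (n : ℕ+) : W →ₗ[ℝ] W :=
  onBasis fun S =>
    (2 : ℝ) • (∑ s ∈ S.filter (fun s => n < s), psi (s - n) (psiStar s (vS S)))
      + par (psiStar n (vS S))
      + (2 : ℝ) • (∑ j ∈ Finset.Icc 1 (((n : ℕ) - 1) / 2),
          ((-1 : ℝ) ^ j) • psiStar j.toPNat' (psiStar ((n : ℕ) - j).toPNat' (vS S)))

/-- `α_{-n} = 2 ∑_{j≥1} ψ_{n+j} ψ*_j + ψ_n Π + 2 ∑_{j=1}^{(n-1)/2} (-1)^j ψ_{n-j} ψ_j`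
for odd `n ≥ 1` (only `j ∈ S` contribute to the first sum). -/
def alphaM (n : ℕ+) : W →ₗ[ℝ] W :=
  onBasis fun S =>
    (2 : ℝ) • (∑ s ∈ S, psi (n + s) (psiStar s (vS S)))
      + psi n (par (vS S))
      + (2 : ℝ) • (∑ j ∈ Finset.Icc 1 (((n : ℕ) - 1) / 2),
          ((-1 : ℝ) ^ j) • psi ((n : ℕ) - j).toPNat' (psi j.toPNat' (vS S)))

/-- `α_n` for a (nonzero odd) integer `n`. -/
def alpha (n : ℤ) : W →ₗ[ℝ] W :=
  if 0 < n then alphaP n.toNat.toPNat' else if n < 0 then alphaM (-n).toNat.toPNat' else 0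

/-- `ψ̃_k`: `ψ_k` for `k ≥ 1`, `Π/2` for `k = 0`, `(-1)^k ψ*_{-k}` for `k ≤ -1`. -/
def psiT (k : ℤ) : W →ₗ[ℝ] W :=
  if 0 < k then psi k.toNat.toPNat'
  else if k = 0 then (2 : ℝ)⁻¹ • par
  else ((-1 : ℝ) ^ k) • psiStar (-k).toNat.toPNat'

/-- the inner product on `W` with `⟨v_S, v_T⟩ = δ_{S,T} 2^{-|S|}`. -/
def innerW (f g : W) : ℝ := f.sum fun S a => a * g S * (2 : ℝ)⁻¹ ^ S.card

/-! `ψ̃_l v_∅` is `v_{l}` for `l ≥ 1`, `v_∅ / 2` for `l = 0` and `0` for `l < 0`. The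
`v_∅`-coefficient of `ψ̃_k` applied to it vanishes except for `k = l = 0` (`Π/2` twice) and
`k = -l ≥ 1` (`ψ*_l` undoing `ψ_l`, with factor `1/2` and sign `(-1)^l`). So the double series
lives on the antidiagonal `k = -l ≥ 0`, where it is `1/4` plus the geometric series
`∑_{n ≥ 1} (-w/z)^n / 2 = -w / (2(z + w))`; absolute convergence comes for free in the
finite-dimensional space `ℂ`. -/

lemma Int.eq_pnat_or_eq_zero_or_eq_neg_pnat (k : ℤ) :
    (∃ m : ℕ+, k = m) ∨ k = 0 ∨ ∃ m : ℕ+, k = -m := by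
  rcases lt_trichotomy k 0 with hk | hk | hk
  · exact .inr <| .inr ⟨(-k).toNat.toPNat', by simp; omega⟩
  · exact .inr <| .inl hk
  · exact .inl ⟨k.toNat.toPNat', by simp; omega⟩

lemma onBasis_vS (f : Finset ℕ+ → W) (S : Finset ℕ+) : onBasis f (vS S) = f S := by
  simp [onBasis, vS]

lemma innerW_vac (f : W) : innerW f vac = f ∅ := by
  rw [innerW, Finsupp.sum_eq_single ∅ (fun S _ hS => by simp [vac, vS, Ne.symm hS]) (by simp)]
  simp [vac, vS]

lemma psi_vac (m : ℕ+) : psi m vac = vS {m} := by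
  simp [psi, vac, onBasis_vS]

lemma psi_apply_empty (m : ℕ+) (f : W) : psi m f ∅ = 0 := by
  induction f using Finsupp.induction_linear with
  | zero => simp
  | add f g hf hg => simp [hf, hg]
  | single S a =>
    rw [← mul_one a, ← smul_eq_mul, ← Finsupp.smul_single, map_smul, ← vS, psi, onBasis_vS]
    split_ifs <;> simp [vS, Finset.insert_ne_empty]

lemma psiStar_vac (m : ℕ+) : psiStar m vac = 0 := by
  simp [psiStar, vac, onBasis_vS]

lemma psiStar_vS_singleton (m n : ℕ+) :
    psiStar m (vS {n}) = if m = n then (2 : ℝ)⁻¹ • vac else 0 := by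
  by_cases h : m = n
  · subst h; simp [psiStar, onBasis_vS, vac, Finset.filter_singleton]
  · simp [psiStar, onBasis_vS, h]

lemma par_vS (S : Finset ℕ+) : par (vS S) = (-1 : ℝ) ^ S.card • vS S :=
  onBasis_vS _ S

lemma par_vac : par vac = vac := by
  simp [vac, par_vS]

lemma psiT_pnat (m : ℕ+) : psiT m = psi m := by
  simp [psiT]

lemma psiT_zero : psiT 0 = (2 : ℝ)⁻¹ • par := by
  simp [psiT]

lemma psiT_neg_pnat (m : ℕ+) : psiT (-m) = (-1 : ℝ) ^ (m : ℕ) • psiStar m := by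
  have hm : ¬ (m : ℤ) < 0 := by simp
  simp [psiT, zpow_neg, hm, ← inv_pow]

lemma innerW_psiT_psiT_vac (k l : ℤ) : innerW (psiT k (psiT l vac)) vac =
    if k = 0 ∧ l = 0 then 1 / 4
    else if 1 ≤ l ∧ k = -l then (-1 : ℝ) ^ l / 2
    else 0 := by
  rw [innerW_vac]
  rcases l.eq_pnat_or_eq_zero_or_eq_neg_pnat with ⟨n, rfl⟩ | rfl | ⟨n, rfl⟩
  · rw [psiT_pnat, psi_vac]
    rcases k.eq_pnat_or_eq_zero_or_eq_neg_pnat with ⟨m, rfl⟩ | rfl | ⟨m, rfl⟩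
    · simp [psiT_pnat, psi_apply_empty]
    · simp only [psiT_zero, LinearMap.smul_apply, par_vS]
      simp [vS]
    · by_cases h : m = n
      · subst h
        have hm : (1 : ℤ) ≤ m := by have := m.pos; omega
        simp only [psiT_neg_pnat, LinearMap.smul_apply, psiStar_vS_singleton]
        simp [vac, vS, hm, div_eq_mul_inv]
      · simp [psiT_neg_pnat, psiStar_vS_singleton, h]
  · rw [psiT_zero, LinearMap.smul_apply, par_vac]
    rcases k.eq_pnat_or_eq_zero_or_eq_neg_pnat with ⟨m, rfl⟩ | rfl | ⟨m, rfl⟩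
    · simp [psiT_pnat, psi_apply_empty]
    · simp only [psiT_zero, LinearMap.smul_apply, map_smul, par_vac]
      norm_num [vac, vS]
    · simp [psiT_neg_pnat, psiStar_vac]
  · have hn : ¬ (1 : ℤ) ≤ -(n : ℤ) := by have := n.pos; omega
    simp [psiT_neg_pnat, psiStar_vac, hn]

lemma innerW_psiT_psiT_vac_antidiagonal (n : ℕ) :
    innerW (psiT (-n) (psiT n vac)) vac = if n = 0 then 1 / 4 else (-1 : ℝ) ^ n / 2 := by
  rw [innerW_psiT_psiT_vac]
  rcases Nat.eq_zero_or_pos n with rfl | hn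
  · simp
  · have hn' : (1 : ℤ) ≤ n := by omega
    simp [hn', Nat.pos_iff_ne_zero.mp hn]

lemma innerW_psiT_psiT_vac_eq_zero (p : ℤ × ℤ)
    (hp : p ∉ Set.range fun n : ℕ => (-(n : ℤ), (n : ℤ))) :
    innerW (psiT p.1 (psiT p.2 vac)) vac = 0 := by
  obtain ⟨k, l⟩ := p
  rw [innerW_psiT_psiT_vac, if_neg, if_neg]
  · rintro ⟨hl, hkl⟩
    exact hp ⟨l.toNat, by simp; omega⟩
  · rintro ⟨rfl, rfl⟩
    exact hp ⟨0, by simp⟩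

lemma hasSum_vacuum_series (z w : ℂ) (hzw : ‖w‖ < ‖z‖) :
    HasSum (fun p : ℤ × ℤ => z ^ p.1 * w ^ p.2 * ((innerW (psiT p.1 (psiT p.2 vac)) vac : ℝ) : ℂ))
      ((z - w) / (4 * (z + w))) := by
  have hz : z ≠ 0 := norm_pos_iff.mp ((norm_nonneg w).trans_lt hzw)
  have hzw' : z + w ≠ 0 := by
    intro h
    rw [eq_neg_of_add_eq_zero_right h, norm_neg] at hzw
    exact lt_irrefl _ hzw
  set r := -w / z with hr_def
  have hr : ‖r‖ < 1 := by
    rwa [norm_div, norm_neg, div_lt_one (norm_pos_iff.mpr hz)]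
  have hinj : Function.Injective fun n : ℕ => (-(n : ℤ), (n : ℤ)) :=
    fun a b h => by simpa using congrArg Prod.snd h
  rw [← hinj.hasSum_iff fun p hp => by simp [innerW_psiT_psiT_vac_eq_zero p hp]]
  have hgeom := ((hasSum_geometric_of_norm_lt_one hr).div_const 2).update 0 (1 / 4)
  have hval : 1 / 4 - r ^ 0 / 2 + (1 - r)⁻¹ / 2 = (z - w) / (4 * (z + w)) := by
    have h1r : 1 - r = (z + w) / z := by
      rw [hr_def]
      field_simp
      ring
    rw [h1r, inv_div]
    field_simp
    ring
  rw [hval] at hgeom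
  refine hgeom.congr_fun fun n => ?_
  rw [Function.comp_apply, innerW_psiT_psiT_vac_antidiagonal, Function.update_apply]
  split_ifs with hn
  · simp [hn]
  · rw [hr_def, zpow_neg, zpow_natCast, zpow_natCast, div_pow, neg_pow]
    push_cast
    ring

/-- `⟨ψ̃_k ψ̃_l v_∅, v_∅⟩` equals `1/4` if `k = l = 0`, `(-1)^l/2` if `l ≥ 1, k = -l`,
and `0` otherwise; consequently for complex `z, w` with `0 < |w| < |z|` the series
`∑_{k,l} z^k w^l ⟨ψ̃_k ψ̃_l v_∅, v_∅⟩` converges absolutely to `(z-w)/(4(z+w))`. -/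
theorem psiT_vacuum_expectation :
    (∀ k l : ℤ, innerW (psiT k (psiT l vac)) vac =
      if k = 0 ∧ l = 0 then 1 / 4
      else if 1 ≤ l ∧ k = -l then (-1 : ℝ) ^ l / 2
      else 0) ∧
    (∀ z w : ℂ, 0 < ‖w‖ → ‖w‖ < ‖z‖ →
      Summable (fun p : ℤ × ℤ =>
        ‖z ^ p.1 * w ^ p.2 * ((innerW (psiT p.1 (psiT p.2 vac)) vac : ℝ) : ℂ)‖) ∧
      ∑' p : ℤ × ℤ, z ^ p.1 * w ^ p.2 * ((innerW (psiT p.1 (psiT p.2 vac)) vac : ℝ) : ℂ) =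
        (z - w) / (4 * (z + w))) := by
  refine ⟨innerW_psiT_psiT_vac, fun z w _ hzw => ?_⟩
  have h := hasSum_vacuum_series z w hzw
  exact ⟨summable_norm_iff.mpr h.summable, h.tsum_eq⟩

end
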